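/- (Exact linear regression equation of Proposition 1.) Let α > 0, let Ω, v : ℝ → EuclideanSpace ℝ (Fin 3) be continuous, and let z : ℝ → EuclideanSpace ℝ (Fin 3) be differentiable with z(t) ≠ 0 and z'(t) = −Ω(t) ×₃ z(t) − v(t) for all t ≥ 0. Set y(t) := ‖z(t)‖⁻¹ • z(t) and r(t) := ‖z(t)‖. Suppose x̄, p₂, q : ℝ → EuclideanSpace ℝ (Fin 3) are differentiable and satisfy for all t ≥ 0: x̄'(t) = −α x̄(t) + α² • y(t) with x̄(0) = α • y(0); p₂'(t) = −α p₂(t) + α • (Ω(t) ×₃ y(t)) with p₂(0) = 0; and, with φ(t) := α • y(t) − x̄(t) + p₂(t), q'(t) = −α q(t) + ⟪y(t), v(t)⟫ • φ(t) + α • (v(t) − ⟪y(t), v(t)⟫ • y(t)) with q(0) = 0. Then r(t) • φ(t) + q(t) = 0 for all t ≥ 0. -/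

import Mathlib

open scoped RealInnerProductSpace

/-!
The residual `e = r • φ + q` obeys the stable linear equation `e' = -α • e`: writing
`r • φ = α • z - r • x̄ + r • p₂`, the product rule and the filter equations leave only `-α • e`,
because `r' = -⟪y, v⟫` (the rotation `Ω × z` is orthogonal to `z`) and `r • (Ω × y) = Ω × z`.
The initial conditions give `e 0 = 0`, so `e` vanishes on `[0, ∞)` by Grönwall uniqueness.
-/

/-- Cross product on `EuclideanSpace ℝ (Fin 3)`, transported from Mathlib's
`crossProduct` on `Fin 3 → ℝ`. -/
noncomputable def cross3 (a b : EuclideanSpace ℝ (Fin 3)) : EuclideanSpace ℝ (Fin 3) :=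
  (WithLp.equiv 2 (Fin 3 → ℝ)).symm
    (crossProduct ((WithLp.equiv 2 (Fin 3 → ℝ)) a) ((WithLp.equiv 2 (Fin 3 → ℝ)) b))

theorem inner_cross3_self (a b : EuclideanSpace ℝ (Fin 3)) : ⟪a, cross3 b a⟫ = 0 := by
  have h := dot_cross_self ((WithLp.equiv 2 (Fin 3 → ℝ)) b) ((WithLp.equiv 2 (Fin 3 → ℝ)) a)
  simp only [dotProduct] at h
  simp only [cross3, PiLp.inner_apply, RCLike.inner_apply, conj_trivial]
  simpa [mul_comm] using h

theorem cross3_smul_right (s : ℝ) (a b : EuclideanSpace ℝ (Fin 3)) :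
    cross3 a (s • b) = s • cross3 a b := by
  simp [cross3]

theorem norm_smul_inv_norm_smul {E : Type*} [NormedAddCommGroup E] [NormedSpace ℝ E] (x : E) :
    ‖x‖ • ‖x‖⁻¹ • x = x := by
  rcases eq_or_ne x 0 with rfl | hx
  · simp
  · exact smul_inv_smul₀ (norm_ne_zero_iff.mpr hx) x

theorem HasDerivAt.norm {F : Type*} [NormedAddCommGroup F] [InnerProductSpace ℝ F]
    {f : ℝ → F} {f' : F} {t : ℝ} (hf : HasDerivAt f f' t) (h0 : f t ≠ 0) :
    HasDerivAt (‖f ·‖) ⟪‖f t‖⁻¹ • f t, f'⟫ t := by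
  have h := hf.norm_sq.sqrt (by positivity)
  simp only [Real.sqrt_sq (norm_nonneg _)] at h
  convert h using 1
  rw [real_inner_smul_left]
  field_simp

theorem hasDerivAt_norm_of_hasDerivAt_neg_cross3_sub {z : ℝ → EuclideanSpace ℝ (Fin 3)}
    {ω w : EuclideanSpace ℝ (Fin 3)} {t : ℝ} (hz : HasDerivAt z (-cross3 ω (z t) - w) t)
    (h0 : z t ≠ 0) : HasDerivAt (‖z ·‖) (-⟪‖z t‖⁻¹ • z t, w⟫) t := by
  convert hz.norm h0 using 1
  rw [inner_sub_right, inner_neg_right, real_inner_smul_left, real_inner_smul_left,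
    inner_cross3_self]
  ring

theorem eq_zero_of_hasDerivAt_smul_self {E : Type*} [NormedAddCommGroup E] [NormedSpace ℝ E]
    {F : ℝ → E} {c : ℝ} (hF : ∀ t ≥ 0, HasDerivAt F (c • F t) t) (h0 : F 0 = 0) :
    ∀ t ≥ 0, F t = 0 := fun t ht =>
  eq_zero_of_abs_deriv_le_mul_abs_self_of_eq_zero_right (K := |c|)
    (fun s hs => (hF s hs.1).continuousAt.continuousWithinAt)
    (fun s hs => (hF s hs.1).hasDerivWithinAt) h0
    (fun s _ => (norm_smul c (F s)).le) t ⟨ht, le_rfl⟩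

theorem hasDerivAt_regression_residual (α : ℝ) {ω w : EuclideanSpace ℝ (Fin 3)} {r : ℝ → ℝ}
    {z y xb p₂ q : ℝ → EuclideanSpace ℝ (Fin 3)} {t : ℝ} (hry : ∀ s, r s • y s = z s)
    (hr : HasDerivAt r (-⟪y t, w⟫) t) (hz : HasDerivAt z (-cross3 ω (z t) - w) t)
    (hxb : HasDerivAt xb ((-α) • xb t + (α ^ 2) • y t) t)
    (hp₂ : HasDerivAt p₂ ((-α) • p₂ t + α • cross3 ω (y t)) t)
    (hq : HasDerivAt q
      ((-α) • q t + ⟪y t, w⟫ • (α • y t - xb t + p₂ t) + α • (w - ⟪y t, w⟫ • y t)) t) :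
    HasDerivAt (fun s => r s • (α • y s - xb s + p₂ s) + q s)
      ((-α) • (r t • (α • y t - xb t + p₂ t) + q t)) t := by
  have hφ : (fun s => r s • (α • y s - xb s + p₂ s) + q s) =
      fun s => α • z s - r s • xb s + r s • p₂ s + q s := by
    funext s
    rw [smul_add, smul_sub, smul_comm (r s) α, hry s]
  have hcross : r t • cross3 ω (y t) = cross3 ω (z t) := by
    rw [← cross3_smul_right, hry]
  rw [hφ]
  refine ((((hz.const_smul α).sub (hr.smul hxb)).add (hr.smul hp₂)).add hq).congr_deriv ?_
  linear_combination (norm := module) α • hcross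

theorem stmt4_general (α : ℝ)
    (Ω v : ℝ → EuclideanSpace ℝ (Fin 3))
    (z : ℝ → EuclideanSpace ℝ (Fin 3))
    (hz : Differentiable ℝ z)
    (hz0 : ∀ t ≥ (0:ℝ), z t ≠ 0)
    (hzd : ∀ t ≥ (0:ℝ), deriv z t = -cross3 (Ω t) (z t) - v t)
    (y : ℝ → EuclideanSpace ℝ (Fin 3)) (hy : y = fun t => ‖z t‖⁻¹ • z t)
    (r : ℝ → ℝ) (hr : r = fun t => ‖z t‖)
    (xb p₂ q : ℝ → EuclideanSpace ℝ (Fin 3))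
    (hxb : Differentiable ℝ xb)
    (hxbd : ∀ t ≥ (0:ℝ), deriv xb t = (-α) • xb t + (α ^ 2) • y t)
    (hxb0 : xb 0 = α • y 0)
    (hp₂ : Differentiable ℝ p₂)
    (hp₂d : ∀ t ≥ (0:ℝ), deriv p₂ t = (-α) • p₂ t + α • cross3 (Ω t) (y t))
    (hp₂0 : p₂ 0 = 0)
    (φ : ℝ → EuclideanSpace ℝ (Fin 3)) (hφ : φ = fun t => α • y t - xb t + p₂ t)
    (hq : Differentiable ℝ q)
    (hqd : ∀ t ≥ (0:ℝ), deriv q t =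
      (-α) • q t + ⟪y t, v t⟫ • φ t + α • (v t - ⟪y t, v t⟫ • y t))
    (hq0 : q 0 = 0) :
    ∀ t ≥ (0:ℝ), r t • φ t + q t = 0 := by
  subst hy hr hφ
  beta_reduce at *
  refine eq_zero_of_hasDerivAt_smul_self (c := -α) (fun t ht => ?_) (by simp [hxb0, hp₂0, hq0])
  have hzt : HasDerivAt z (-cross3 (Ω t) (z t) - v t) t := hzd t ht ▸ (hz t).hasDerivAt
  exact hasDerivAt_regression_residual α (fun s => norm_smul_inv_norm_smul (z s))
    (hasDerivAt_norm_of_hasDerivAt_neg_cross3_sub hzt (hz0 t ht)) hzt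
    (hxbd t ht ▸ (hxb t).hasDerivAt) (hp₂d t ht ▸ (hp₂ t).hasDerivAt)
    (hqd t ht ▸ (hq t).hasDerivAt)

/-- Exact (transient-free) linear regression equation of Proposition 1:
`r(t) • φ(t) + q(t) = 0` for all `t ≥ 0`. -/
theorem stmt4 (α : ℝ) (hα : 0 < α)
    (Ω v : ℝ → EuclideanSpace ℝ (Fin 3)) (hΩ : Continuous Ω) (hv : Continuous v)
    (z : ℝ → EuclideanSpace ℝ (Fin 3))
    (hz : Differentiable ℝ z)
    (hz0 : ∀ t ≥ (0:ℝ), z t ≠ 0)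
    (hzd : ∀ t ≥ (0:ℝ), deriv z t = -cross3 (Ω t) (z t) - v t)
    (y : ℝ → EuclideanSpace ℝ (Fin 3)) (hy : y = fun t => ‖z t‖⁻¹ • z t)
    (r : ℝ → ℝ) (hr : r = fun t => ‖z t‖)
    (xb p₂ q : ℝ → EuclideanSpace ℝ (Fin 3))
    (hxb : Differentiable ℝ xb)
    (hxbd : ∀ t ≥ (0:ℝ), deriv xb t = (-α) • xb t + (α ^ 2) • y t)
    (hxb0 : xb 0 = α • y 0)
    (hp₂ : Differentiable ℝ p₂)
    (hp₂d : ∀ t ≥ (0:ℝ), deriv p₂ t = (-α) • p₂ t + α • cross3 (Ω t) (y t))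
    (hp₂0 : p₂ 0 = 0)
    (φ : ℝ → EuclideanSpace ℝ (Fin 3)) (hφ : φ = fun t => α • y t - xb t + p₂ t)
    (hq : Differentiable ℝ q)
    (hqd : ∀ t ≥ (0:ℝ), deriv q t =
      (-α) • q t + ⟪y t, v t⟫ • φ t + α • (v t - ⟪y t, v t⟫ • y t))
    (hq0 : q 0 = 0) :
    ∀ t ≥ (0:ℝ), r t • φ t + q t = 0 :=
  stmt4_general α Ω v z hz hz0 hzd y hy r hr xb p₂ q hxb hxbd hxb0 hp₂ hp₂d hp₂0 φ hφ hq hqd hq0
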